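/- Let ρ̃₀ > 0 and let p : [0,∞) → ℝ be continuous on [0,∞), continuously differentiable on (0,∞), with p'(ρ) > 0 for all ρ > 0, limsup_{ρ→∞} p(ρ)/P(ρ) < ∞, and liminf_{ρ→∞} p(ρ)/ρ^γ ≥ p_∞ for some γ > 1 and p_∞ > 0, where P(ρ) = ρ ∫_{ρ̃₀}^{ρ} p(z)/z² dz for ρ > 0, extended continuously to ρ = 0. Then for every ρ̃ > 0 there exists a constant C > 0 such that ρ^γ ≤ C ( 1 + P(ρ) − P'(ρ̃)(ρ − ρ̃) − P(ρ̃) ) for all ρ ≥ 0. -/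

import Mathlib

/-!
On `(0, ∞)` the pressure potential satisfies `P'' = p'/ρ ≥ 0`; as `P` is also continuous at `0`,
it is convex on `[0, ∞)`, so the relative energy, the gap between `P` and its tangent at `ρ̃`, is
nonnegative. For large `z` we have `p z ≥ (p_∞/2) z^γ`, and integrating `p z / z²` gives
`P ρ ≥ c ρ^γ - C₀ ρ` with `c > 0`. Since `γ > 1`, this beats the affine tangent, so the relative
energy is at least `(c/2) ρ^γ` for large `ρ`; on the remaining bounded range `ρ^γ` is bounded.
-/

open Filter Set MeasureTheory

theorem ConvexOn.add_mul_sub_le_of_hasDerivAt {S : Set ℝ} {f : ℝ → ℝ} {f' x y : ℝ}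
    (hf : ConvexOn ℝ S f) (hx : x ∈ S) (hy : y ∈ S) (hf' : HasDerivAt f f' x) :
    f x + f' * (y - x) ≤ f y := by
  rcases lt_trichotomy x y with hxy | rfl | hxy
  · have := hf.le_slope_of_hasDerivAt hx hy hxy hf'
    rw [slope_def_field, le_div_iff₀ (sub_pos.2 hxy)] at this
    linarith
  · simp
  · have := hf.slope_le_of_hasDerivAt hy hx hxy hf'
    rw [slope_def_field, div_le_iff₀ (sub_pos.2 hxy)] at this
    linarith

theorem eventually_mul_add_le_mul_rpow {γ ε : ℝ} (hγ : 1 < γ) (hε : 0 < ε) (K B : ℝ) :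
    ∀ᶠ ρ in atTop, K * ρ + B ≤ ε * ρ ^ γ := by
  have hpow : Tendsto (fun ρ : ℝ => ε * ρ ^ (γ - 1)) atTop atTop :=
    (tendsto_rpow_atTop (by linarith)).const_mul_atTop hε
  filter_upwards [hpow.eventually_ge_atTop (|K| + |B|), eventually_ge_atTop 1] with ρ hbig hρ
  have hρ0 : (0 : ℝ) ≤ ρ := zero_le_one.trans hρ
  calc K * ρ + B ≤ |K| * ρ + |B| * ρ := by
        gcongr
        · exact le_abs_self K
        · exact (le_abs_self B).trans (le_mul_of_one_le_right (abs_nonneg B) hρ)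
    _ = (|K| + |B|) * ρ := by ring
    _ ≤ ε * ρ ^ (γ - 1) * ρ := by gcongr
    _ = ε * ρ ^ γ := by
        rw [mul_assoc, ← Real.rpow_add_one (by positivity), sub_add_cancel]

theorem exists_rpow_le_mul_one_add {E : ℝ → ℝ} {γ c : ℝ} (hγ : 0 ≤ γ) (hc : 0 < c)
    (hE : ∀ ρ, 0 ≤ ρ → 0 ≤ E ρ) (hgrowth : ∀ᶠ ρ in atTop, c * ρ ^ γ ≤ E ρ) :
    ∃ C, 0 < C ∧ ∀ ρ, 0 ≤ ρ → ρ ^ γ ≤ C * (1 + E ρ) := by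
  obtain ⟨M, hM⟩ := eventually_atTop.1 (hgrowth.and (eventually_ge_atTop 0))
  have hM0 : 0 ≤ M := (hM M le_rfl).2
  refine ⟨c⁻¹ + M ^ γ, by positivity, fun ρ hρ => ?_⟩
  have hEρ := hE ρ hρ
  rcases le_total ρ M with hρM | hMρ
  · calc ρ ^ γ ≤ M ^ γ := Real.rpow_le_rpow hρ hρM hγ
      _ ≤ (c⁻¹ + M ^ γ) * (1 + E ρ) := by nlinarith [inv_pos.2 hc, Real.rpow_nonneg hM0 γ]
  · have hcρ : c * ρ ^ γ ≤ E ρ := (hM ρ hMρ).1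
    calc ρ ^ γ ≤ c⁻¹ * E ρ := by rwa [inv_mul_eq_div, le_div_iff₀' hc]
      _ ≤ (c⁻¹ + M ^ γ) * (1 + E ρ) := by nlinarith [inv_pos.2 hc, Real.rpow_nonneg hM0 γ]

theorem mul_rpow_sub_le_integral {f : ℝ → ℝ} {c s M ρ : ℝ} (hs : s ≠ -1) (hM : 0 < M)
    (hMρ : M ≤ ρ) (hf : IntervalIntegrable f volume M ρ) (hlow : ∀ z ∈ Icc M ρ, c * z ^ s ≤ f z) :
    c / (s + 1) * (ρ ^ (s + 1) - M ^ (s + 1)) ≤ ∫ z in M..ρ, f z := by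
  have hzero : (0 : ℝ) ∉ uIcc M ρ := notMem_uIcc_of_lt hM (hM.trans_le hMρ)
  have hint : IntervalIntegrable (fun z => c * z ^ s) volume M ρ :=
    (intervalIntegral.intervalIntegrable_rpow (Or.inr hzero)).const_mul c
  calc c / (s + 1) * (ρ ^ (s + 1) - M ^ (s + 1)) = ∫ z in M..ρ, c * z ^ s := by
        rw [intervalIntegral.integral_const_mul,
          integral_rpow (Or.inr ⟨hs, hzero⟩)]
        ring
    _ ≤ ∫ z in M..ρ, f z := intervalIntegral.integral_mono_on hMρ hint hf hlow

section PressurePotential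

variable {p P : ℝ → ℝ} {ρ₀ : ℝ}

theorem intervalIntegrable_div_sq (hp : ContinuousOn p (Ioi 0)) {a b : ℝ} (ha : 0 < a)
    (hb : 0 < b) : IntervalIntegrable (fun z => p z / z ^ 2) volume a b := by
  refine ContinuousOn.intervalIntegrable (fun z hz => ?_)
  have hz0 : 0 < z := (lt_min ha hb).trans_le hz.1
  exact ((hp z hz0).mono_of_mem_nhdsWithin (mem_nhdsWithin_of_mem_nhds (Ioi_mem_nhds hz0))).div
    (continuousWithinAt_id.pow 2) (pow_ne_zero 2 hz0.ne')

theorem hasDerivAt_integral_div_sq (hρ₀ : 0 < ρ₀) (hp : ContinuousOn p (Ioi 0)) {x : ℝ}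
    (hx : 0 < x) : HasDerivAt (fun ρ => ∫ z in ρ₀..ρ, p z / z ^ 2) (p x / x ^ 2) x := by
  have hcont : ContinuousOn (fun z => p z / z ^ 2) (Ioi 0) :=
    hp.div (continuousOn_pow 2) fun z hz => pow_ne_zero 2 (ne_of_gt hz)
  exact intervalIntegral.integral_hasDerivAt_right (intervalIntegrable_div_sq hp hρ₀ hx)
    (hcont.stronglyMeasurableAtFilter isOpen_Ioi x hx)
    (hcont.continuousAt (Ioi_mem_nhds hx))

theorem hasDerivAt_pressurePotential (hρ₀ : 0 < ρ₀) (hp : ContinuousOn p (Ioi 0))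
    (hP : ∀ ρ ∈ Ioi (0 : ℝ), P ρ = ρ * ∫ z in ρ₀..ρ, p z / z ^ 2) {x : ℝ} (hx : 0 < x) :
    HasDerivAt P ((∫ z in ρ₀..x, p z / z ^ 2) + p x / x) x := by
  have h := (hasDerivAt_id x).mul (hasDerivAt_integral_div_sq hρ₀ hp hx)
  refine (h.congr_deriv ?_).congr_of_eventuallyEq
    (eventually_of_mem (Ioi_mem_nhds hx) fun ρ hρ => hP ρ hρ)
  simp only [id_eq, one_mul]
  field_simp

theorem hasDerivAt_deriv_pressurePotential (hρ₀ : 0 < ρ₀) {p' : ℝ → ℝ}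
    (hp : ∀ ρ ∈ Ioi (0 : ℝ), HasDerivAt p (p' ρ) ρ) {x : ℝ} (hx : 0 < x) :
    HasDerivAt (fun ρ => (∫ z in ρ₀..ρ, p z / z ^ 2) + p ρ / ρ) (p' x / x) x := by
  have hcont : ContinuousOn p (Ioi 0) := fun ρ hρ => (hp ρ hρ).continuousAt.continuousWithinAt
  refine ((hasDerivAt_integral_div_sq hρ₀ hcont hx).add
    ((hp x hx).div (hasDerivAt_id x) hx.ne')).congr_deriv ?_
  simp only [id_eq]
  field_simp
  ring

theorem convexOn_pressurePotential (hρ₀ : 0 < ρ₀) {p' : ℝ → ℝ}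
    (hp : ∀ ρ ∈ Ioi (0 : ℝ), HasDerivAt p (p' ρ) ρ) (hp' : ∀ ρ ∈ Ioi (0 : ℝ), 0 ≤ p' ρ)
    (hP : ∀ ρ ∈ Ioi (0 : ℝ), P ρ = ρ * ∫ z in ρ₀..ρ, p z / z ^ 2)
    (hP0 : Tendsto P (nhdsWithin 0 (Ioi 0)) (nhds (P 0))) :
    ConvexOn ℝ (Ici 0) P := by
  have hcont : ContinuousOn p (Ioi 0) := fun ρ hρ => (hp ρ hρ).continuousAt.continuousWithinAt
  have hPd (x : ℝ) (hx : x ∈ Ioi (0 : ℝ)) := hasDerivAt_pressurePotential hρ₀ hcont hP hx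
  have henth (x : ℝ) (hx : x ∈ Ioi (0 : ℝ)) := hasDerivAt_deriv_pressurePotential hρ₀ hp hx
  have hmono : MonotoneOn (fun ρ => (∫ z in ρ₀..ρ, p z / z ^ 2) + p ρ / ρ) (Ioi 0) :=
    monotoneOn_of_hasDerivWithinAt_nonneg (convex_Ioi 0)
      (fun x hx => (henth x hx).continuousAt.continuousWithinAt)
      (fun x hx => (henth x (interior_subset hx)).hasDerivWithinAt)
      (fun x hx => div_nonneg (hp' x (interior_subset hx)) (interior_subset hx).le)
  refine MonotoneOn.convexOn_of_deriv (convex_Ici 0) (fun x hx => ?_) ?_ ?_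
  · rcases (mem_Ici.1 hx).eq_or_lt with rfl | hx
    · exact continuousWithinAt_Ioi_iff_Ici.1 hP0
    · exact (hPd x hx).continuousAt.continuousWithinAt
  · rw [interior_Ici]
    exact fun x hx => (hPd x hx).differentiableAt.differentiableWithinAt
  · rw [interior_Ici]
    intro x hx y hy hxy
    rw [(hPd x hx).deriv, (hPd y hy).deriv]
    exact hmono hx hy hxy

end PressurePotential

theorem exists_mul_rpow_add_mul_le_pressurePotential {p P : ℝ → ℝ} {ρ₀ γ c : ℝ}
    (hρ₀ : 0 < ρ₀) (hp : ContinuousOn p (Ioi 0))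
    (hP : ∀ ρ ∈ Ioi (0 : ℝ), P ρ = ρ * ∫ z in ρ₀..ρ, p z / z ^ 2) (hγ : γ ≠ 1)
    (hlow : ∀ᶠ ρ in atTop, c ≤ p ρ / ρ ^ γ) :
    ∃ C₀, ∀ᶠ ρ in atTop, c / (γ - 1) * ρ ^ γ + C₀ * ρ ≤ P ρ := by
  obtain ⟨M₀, hM₀⟩ := eventually_atTop.1 hlow
  set M := max M₀ 1
  have hM : 0 < M := zero_lt_one.trans_le (le_max_right _ _)
  refine ⟨(∫ z in ρ₀..M, p z / z ^ 2) - c / (γ - 1) * M ^ (γ - 1), ?_⟩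
  filter_upwards [eventually_ge_atTop M] with ρ hMρ
  have hρ : 0 < ρ := hM.trans_le hMρ
  have hlow' : ∀ z ∈ Icc M ρ, c * z ^ (γ - 2) ≤ p z / z ^ 2 := by
    intro z hz
    have hz0 : 0 < z := hM.trans_le hz.1
    have hcz : c * z ^ γ ≤ p z := by
      rw [← le_div_iff₀ (by positivity)]
      exact hM₀ z ((le_max_left _ _).trans hz.1)
    have hpow : z ^ (γ - 2) = z ^ γ / z ^ 2 := by exact_mod_cast Real.rpow_sub_natCast hz0.ne' γ 2
    rw [hpow, ← mul_div_assoc]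
    gcongr
  have hint := mul_rpow_sub_le_integral (by contrapose! hγ; linarith) hM hMρ
    (intervalIntegrable_div_sq hp hM hρ) hlow'
  rw [show γ - 2 + 1 = γ - 1 by ring] at hint
  rw [hP ρ hρ, ← intervalIntegral.integral_add_adjacent_intervals
    (intervalIntegrable_div_sq hp hρ₀ hM) (intervalIntegrable_div_sq hp hM hρ),
    ← sub_add_cancel γ 1, Real.rpow_add_one hρ.ne', sub_add_cancel]
  linarith [mul_le_mul_of_nonneg_left hint hρ.le]

theorem relative_energy_coercivity_general
    (ρref0 : ℝ) (hρref0 : 0 < ρref0)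
    (p p' : ℝ → ℝ) (γ pInf : ℝ) (hγ : 1 < γ) (hpInf : 0 < pInf)
    (hp_deriv : ∀ ρ ∈ Set.Ioi (0 : ℝ), HasDerivAt p (p' ρ) ρ)
    (hp'_pos : ∀ ρ ∈ Set.Ioi (0 : ℝ), 0 < p' ρ)
    (P : ℝ → ℝ)
    (hP : ∀ ρ ∈ Set.Ioi (0 : ℝ), P ρ = ρ * ∫ z in ρref0..ρ, p z / z ^ 2)
    (hP0 : Filter.Tendsto P (nhdsWithin 0 (Set.Ioi 0)) (nhds (P 0)))
    (hp_liminf : ∀ c : ℝ, c < pInf → ∀ᶠ ρ in Filter.atTop, c ≤ p ρ / ρ ^ γ) :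
    ∀ ρtil : ℝ, 0 < ρtil →
      ∃ C : ℝ, 0 < C ∧
        ∀ ρ : ℝ, 0 ≤ ρ →
          ρ ^ γ ≤ C * (1 + P ρ - deriv P ρtil * (ρ - ρtil) - P ρtil) := by
  intro ρtil hρtil
  have hp : ContinuousOn p (Ioi 0) := fun ρ hρ => (hp_deriv ρ hρ).continuousAt.continuousWithinAt
  have hconvex := convexOn_pressurePotential hρref0 hp_deriv (fun ρ hρ => (hp'_pos ρ hρ).le) hP hP0
  have hPtil := (hasDerivAt_pressurePotential hρref0 hp hP hρtil).differentiableAt.hasDerivAt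
  have hE (ρ : ℝ) (hρ : 0 ≤ ρ) : 0 ≤ P ρ - deriv P ρtil * (ρ - ρtil) - P ρtil := by
    linarith [hconvex.add_mul_sub_le_of_hasDerivAt (mem_Ici.2 hρtil.le) (mem_Ici.2 hρ) hPtil]
  have hc : 0 < pInf / 2 / (γ - 1) := div_pos (half_pos hpInf) (sub_pos.2 hγ)
  obtain ⟨C₀, hgrowth⟩ := exists_mul_rpow_add_mul_le_pressurePotential hρref0 hp hP hγ.ne'
    (hp_liminf _ (half_lt_self hpInf))
  have hcoercive : ∀ᶠ ρ in atTop,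
      pInf / 2 / (γ - 1) / 2 * ρ ^ γ ≤ P ρ - deriv P ρtil * (ρ - ρtil) - P ρtil := by
    filter_upwards [hgrowth, eventually_mul_add_le_mul_rpow hγ (half_pos hc)
      (deriv P ρtil - C₀) (P ρtil - deriv P ρtil * ρtil)] with ρ hPρ hlin
    linarith
  obtain ⟨C, hC, hbound⟩ := exists_rpow_le_mul_one_add (by linarith) (half_pos hc) hE hcoercive
  exact ⟨C, hC, fun ρ hρ => (hbound ρ hρ).trans_eq (by ring)⟩

/-- pointwise coercivity of the relative energy. For the
pressure potential `P ρ = ρ * ∫_{ρref0}^{ρ} p(z)/z² dz` (extended to `ρ = 0`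
by continuity) associated with a pressure law `p` continuous on `[0,∞)`,
continuously differentiable on `(0,∞)` with `p' > 0` there, satisfying
`limsup_{ρ→∞} p(ρ)/P(ρ) < ∞` and `liminf_{ρ→∞} p(ρ)/ρ^γ ≥ pInf > 0` for some
`γ > 1`: for every `ρtil > 0` there is `C > 0` with
`ρ^γ ≤ C (1 + P(ρ) − P'(ρtil)(ρ − ρtil) − P(ρtil))` for all `ρ ≥ 0`. -/
theorem relative_energy_coercivity
    (ρref0 : ℝ) (hρref0 : 0 < ρref0)
    (p p' : ℝ → ℝ) (γ pInf : ℝ) (hγ : 1 < γ) (hpInf : 0 < pInf)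
    (hp_cont : ContinuousOn p (Set.Ici 0))
    (hp_deriv : ∀ ρ ∈ Set.Ioi (0 : ℝ), HasDerivAt p (p' ρ) ρ)
    (hp'_cont : ContinuousOn p' (Set.Ioi 0))
    (hp'_pos : ∀ ρ ∈ Set.Ioi (0 : ℝ), 0 < p' ρ)
    (P : ℝ → ℝ)
    (hP : ∀ ρ ∈ Set.Ioi (0 : ℝ), P ρ = ρ * ∫ z in ρref0..ρ, p z / z ^ 2)
    (hP0 : Filter.Tendsto P (nhdsWithin 0 (Set.Ioi 0)) (nhds (P 0)))
    (hp_limsup : ∃ PInf : ℝ, ∀ᶠ ρ in Filter.atTop, p ρ / P ρ ≤ PInf)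
    (hp_liminf : ∀ c : ℝ, c < pInf → ∀ᶠ ρ in Filter.atTop, c ≤ p ρ / ρ ^ γ) :
    ∀ ρtil : ℝ, 0 < ρtil →
      ∃ C : ℝ, 0 < C ∧
        ∀ ρ : ℝ, 0 ≤ ρ →
          ρ ^ γ ≤ C * (1 + P ρ - deriv P ρtil * (ρ - ρtil) - P ρtil) :=
  relative_energy_coercivity_general ρref0 hρref0 p p' γ pInf hγ hpInf hp_deriv hp'_pos P hP hP0
    hp_liminf
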